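/- The Kronecker sum operator K = G ⊗ M + τ · I_Q ⊗ C is invertible whenever M and C are symmetric positive definite, τ > 0, and every eigenvalue of G has positive real part. -/

import Mathlib

open Matrix Kronecker
open scoped ComplexOrder
open scoped MatrixOrder Matrix.Norms.L2Operator

lemma aux_posDef_of_posSemidef_det {n : Type*} [Fintype n] [DecidableEq n]
    {A : Matrix n n ℂ} (h : A.PosSemidef) (hd : IsUnit A.det) : A.PosDef := by
  have h' := Matrix.posSemidef_iff_dotProduct_mulVec.mp h
  rw [Matrix.posDef_iff_dotProduct_mulVec]
  refine ⟨h'.1, fun x hx => lt_of_le_of_ne (h'.2 x) fun h0 => hx ?_⟩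
  have hA : A *ᵥ x = 0 := (h.dotProduct_mulVec_zero_iff x).mp h0.symm
  have hinj : Function.Injective (A.mulVec) :=
    (Matrix.mulVec_injective_iff_isUnit).mpr ((Matrix.isUnit_iff_isUnit_det A).mpr hd)
  have := hinj (by simpa [Matrix.mulVec_zero] using hA : A *ᵥ x = A *ᵥ 0)
  simpa using this

lemma aux_map_mul {N : ℕ} (A B : Matrix (Fin N) (Fin N) ℝ) :
    (A * B).map Complex.ofReal = A.map Complex.ofReal * B.map Complex.ofReal := by
  ext i j
  simp [Matrix.mul_apply, Matrix.map_apply]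

lemma aux_map_posDef {N : ℕ} {A : Matrix (Fin N) (Fin N) ℝ} (hA : A.PosDef) :
    (A.map Complex.ofReal).PosDef := by
  have hdet : (A.map Complex.ofReal).det = (A.det : ℂ) := by
    have := (Complex.ofRealHom.map_det A).symm
    exact this
  have hpsd : (A.map Complex.ofReal).PosSemidef := by
    obtain ⟨B, hB⟩ := CStarAlgebra.nonneg_iff_eq_star_mul_self.mp
      (Matrix.nonneg_iff_posSemidef.mpr hA.posSemidef)
    rw [star_eq_conjTranspose] at hB
    rw [← Matrix.nonneg_iff_posSemidef, CStarAlgebra.nonneg_iff_eq_star_mul_self]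
    refine ⟨B.map Complex.ofReal, ?_⟩
    rw [star_eq_conjTranspose]
    have hct : (Bᴴ).map Complex.ofReal = (B.map Complex.ofReal)ᴴ :=
      Matrix.conjTranspose_map Complex.ofReal
        (fun r => by simp [Complex.conj_ofReal]) (A := B)
    rw [hB, aux_map_mul, hct]
  refine aux_posDef_of_posSemidef_det hpsd ?_
  rw [hdet]
  exact (Complex.ofReal_ne_zero.mpr hA.det_pos.ne').isUnit

-- spectrum fact: -c not eigenvalue implies unit
lemma aux_isUnit_add_smul_one {Q : ℕ} (G : Matrix (Fin Q) (Fin Q) ℂ)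
    (hG : ∀ μ ∈ spectrum ℂ G, 0 < μ.re) {c : ℂ} (hc : c.re > 0) :
    IsUnit (G + c • (1 : Matrix (Fin Q) (Fin Q) ℂ)) := by
  by_contra h
  have hmem : (-c) ∈ spectrum ℂ G := by
    rw [spectrum.mem_iff]
    intro hu
    apply h
    have : algebraMap ℂ (Matrix (Fin Q) (Fin Q) ℂ) (-c) - G
        = -(G + c • (1 : Matrix (Fin Q) (Fin Q) ℂ)) := by
      rw [Algebra.algebraMap_eq_smul_one]
      module
    rw [this] at hu
    simpa using hu.neg
  have := hG _ hmem
  simp only [Complex.neg_re] at this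
  linarith

-- kronecker sum with diagonal is block diagonal
lemma aux_blockDiag {Q N : ℕ} (G : Matrix (Fin Q) (Fin Q) ℂ) (d : Fin N → ℂ) (τ : ℂ) :
    G ⊗ₖ (1 : Matrix (Fin N) (Fin N) ℂ) + τ • ((1 : Matrix (Fin Q) (Fin Q) ℂ) ⊗ₖ diagonal d)
      = Matrix.blockDiagonal (fun j : Fin N => G + (τ * d j) • (1 : Matrix (Fin Q) (Fin Q) ℂ)) := by
  ext ⟨i, j⟩ ⟨k, l⟩
  by_cases hjl : j = l
  · subst hjl
    by_cases hik : i = k <;>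
      simp [Matrix.kroneckerMap_apply, Matrix.blockDiagonal_apply, Matrix.one_apply,
        Matrix.diagonal_apply, hik, mul_comm]
  · simp [Matrix.kroneckerMap_apply, Matrix.blockDiagonal_apply, Matrix.one_apply,
      Matrix.diagonal_apply, hjl, Ne.symm hjl]

/-- The Kronecker stage operator `G ⊗ M + τ I ⊗ C` is invertible when `M, C` are SPD,
`τ > 0`, and every eigenvalue of `G` has positive real part. -/
theorem stmt4 {Q N : ℕ} (G : Matrix (Fin Q) (Fin Q) ℂ)
    (M C : Matrix (Fin N) (Fin N) ℝ) (hM : M.PosDef) (hC : C.PosDef)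
    (τ : ℝ) (hτ : 0 < τ)
    (hG : ∀ μ ∈ spectrum ℂ G, 0 < μ.re) :
    IsUnit (G ⊗ₖ M.map Complex.ofReal +
      (τ : ℂ) • ((1 : Matrix (Fin Q) (Fin Q) ℂ) ⊗ₖ C.map Complex.ofReal)).det := by
  have hMc := aux_map_posDef hM
  have hCc := aux_map_posDef hC
  set Mc := M.map Complex.ofReal with hMcdef
  set Cc := C.map Complex.ofReal with hCcdef
  -- square root of Mc
  set L := CFC.sqrt Mc with hLdef
  have hLpsd : L.PosSemidef := Matrix.nonneg_iff_posSemidef.mp (CFC.sqrt_nonneg Mc)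
  have hLL : L * L = Mc :=
    CFC.sqrt_mul_sqrt_self Mc (Matrix.nonneg_iff_posSemidef.mpr hMc.posSemidef)
  have hLdetu : IsUnit L.det := by
    have h2 : L.det * L.det = Mc.det := by rw [← Matrix.det_mul, hLL]
    have h3 : Mc.det ≠ 0 := hMc.det_pos.ne'
    exact isUnit_of_mul_isUnit_left (y := L.det) (by rw [h2]; exact h3.isUnit)
  have hLinv : L * L⁻¹ = 1 := Matrix.mul_nonsing_inv L hLdetu
  have hLinv' : L⁻¹ * L = 1 := Matrix.nonsing_inv_mul L hLdetu
  -- S = L⁻¹ Cc L⁻¹, PosDef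
  set S := L⁻¹ * Cc * L⁻¹ with hSdef
  have hLinvH : (L⁻¹)ᴴ = L⁻¹ := by
    rw [Matrix.conjTranspose_nonsing_inv, hLpsd.1.eq]
  have hSpsd : S.PosSemidef := by
    have := (hCc.posSemidef).conjTranspose_mul_mul_same (L⁻¹)
    rwa [hLinvH] at this
  have hSdetu : IsUnit S.det := by
    have hLiu : IsUnit (L⁻¹).det := by
      rw [Matrix.det_nonsing_inv]
      exact isUnit_ringInverse.mpr hLdetu
    rw [hSdef, Matrix.det_mul, Matrix.det_mul]
    exact (hLiu.mul hCc.det_pos.ne'.isUnit).mul hLiu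
  have hSpd : S.PosDef := aux_posDef_of_posSemidef_det hSpsd hSdetu
  have hH : S.IsHermitian := hSpd.1
  -- spectral decomposition of S
  set U := (hH.eigenvectorUnitary : Matrix (Fin N) (Fin N) ℂ) with hUdef
  set d : Fin N → ℂ := fun j => ((hH.eigenvalues j : ℝ) : ℂ) with hddef
  have hUU : U * star U = 1 := Matrix.mem_unitaryGroup_iff.mp hH.eigenvectorUnitary.2
  have hSpec : S = U * Matrix.diagonal d * star U := hH.spectral_theorem
  -- the blocks
  set f : Fin N → Matrix (Fin Q) (Fin Q) ℂ :=
    fun j => G + ((τ : ℂ) * d j) • (1 : Matrix (Fin Q) (Fin Q) ℂ) with hfdef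
  have hfu : ∀ j, IsUnit (f j) := by
    intro j
    refine aux_isUnit_add_smul_one G hG ?_
    have hre : ((τ : ℂ) * d j).re = τ * hH.eigenvalues j := by
      rw [hddef]
      push_cast
      simp [← Complex.ofReal_mul]
    rw [hre]
    exact mul_pos hτ (hSpd.eigenvalues_pos j)
  -- key factorization
  have hmid : (1 ⊗ₖ U) * (G ⊗ₖ (1 : Matrix (Fin N) (Fin N) ℂ)
        + (τ : ℂ) • ((1 : Matrix (Fin Q) (Fin Q) ℂ) ⊗ₖ Matrix.diagonal d)) * (1 ⊗ₖ star U)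
      = G ⊗ₖ (1 : Matrix (Fin N) (Fin N) ℂ) + (τ : ℂ) • ((1 : Matrix (Fin Q) (Fin Q) ℂ) ⊗ₖ S) := by
    rw [mul_add, add_mul, mul_smul_comm, smul_mul_assoc, ← Matrix.mul_kronecker_mul,
      ← Matrix.mul_kronecker_mul, ← Matrix.mul_kronecker_mul, ← Matrix.mul_kronecker_mul]
    simp only [one_mul, mul_one, Matrix.one_mul, Matrix.mul_one]
    rw [hUU, hSpec]
  have hLSL : L * S * L = Cc := by
    have h4 : L * (L⁻¹ * Cc * L⁻¹) * L = (L * L⁻¹) * Cc * (L⁻¹ * L) := by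
      simp only [Matrix.mul_assoc]
    rw [hSdef, h4, hLinv, hLinv', one_mul, mul_one]
  have houter : (1 ⊗ₖ L) * (G ⊗ₖ (1 : Matrix (Fin N) (Fin N) ℂ)
        + (τ : ℂ) • ((1 : Matrix (Fin Q) (Fin Q) ℂ) ⊗ₖ S)) * (1 ⊗ₖ L)
      = G ⊗ₖ Mc + (τ : ℂ) • ((1 : Matrix (Fin Q) (Fin Q) ℂ) ⊗ₖ Cc) := by
    rw [mul_add, add_mul, mul_smul_comm, smul_mul_assoc, ← Matrix.mul_kronecker_mul,
      ← Matrix.mul_kronecker_mul, ← Matrix.mul_kronecker_mul, ← Matrix.mul_kronecker_mul]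
    simp only [one_mul, mul_one, Matrix.one_mul, Matrix.mul_one]
    rw [hLL, hLSL]
  have key : G ⊗ₖ Mc + (τ : ℂ) • ((1 : Matrix (Fin Q) (Fin Q) ℂ) ⊗ₖ Cc)
      = (1 ⊗ₖ L) * ((1 ⊗ₖ U) * Matrix.blockDiagonal f * (1 ⊗ₖ star U)) * (1 ⊗ₖ L) := by
    rw [← houter, ← hmid, ← aux_blockDiag G d (τ : ℂ)]
  -- each factor is a unit
  have hkronunit : ∀ {A : Matrix (Fin N) (Fin N) ℂ}, IsUnit A.det →
      IsUnit ((1 : Matrix (Fin Q) (Fin Q) ℂ) ⊗ₖ A) := by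
    intro A hA
    rw [Matrix.isUnit_iff_isUnit_det, Matrix.det_kronecker, Matrix.det_one, one_pow, one_mul]
    exact hA.pow _
  have hUdet : IsUnit U.det := by
    refine isUnit_of_mul_isUnit_left (y := (star U).det) ?_
    rw [← Matrix.det_mul, hUU, Matrix.det_one]
    exact isUnit_one
  have hUstardet : IsUnit (star U).det := by
    refine isUnit_of_mul_isUnit_right (x := U.det) ?_
    rw [← Matrix.det_mul, hUU, Matrix.det_one]
    exact isUnit_one
  have hblocku : IsUnit (Matrix.blockDiagonal f) := by
    rw [Matrix.isUnit_iff_isUnit_det, Matrix.det_blockDiagonal]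
    refine isUnit_iff_ne_zero.mpr (Finset.prod_ne_zero_iff.mpr fun j _ => ?_)
    exact (((Matrix.isUnit_iff_isUnit_det _).mp (hfu j)).ne_zero)
  have hfinal : IsUnit (G ⊗ₖ Mc + (τ : ℂ) • ((1 : Matrix (Fin Q) (Fin Q) ℂ) ⊗ₖ Cc)) := by
    rw [key]
    exact ((hkronunit hLdetu).mul
      (((hkronunit hUdet).mul hblocku).mul (hkronunit hUstardet))).mul (hkronunit hLdetu)
  exact (Matrix.isUnit_iff_isUnit_det _).mp hfinal
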